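/- arXiv:2009.08089 — 2 statements merged into one kernel-verified Lean document; each statement's English description precedes it below -/
import Mathlib

section
/- Let α ∈ (0,1] and β ∈ [0,1), let A ∈ ℝ^{m×n} with m ≥ n be a random matrix satisfying Assumption 1 (with parameter K), and let b = b̃ + b_C where A x* = b̃ and |supp(b_C)| = βm. Then there exists a constant C_K > 0 depending only on K such that with probability at least 1 − 2·exp(−m), simultaneously for every x ∈ ℝⁿ, the bound |⟨a_i, x⟩ − b_i| ≤ (C_K/(α√n))·‖x − x*‖ holds for all but at most (α + β)m indices i ∈ [m]. -/
open MeasureTheory ProbabilityTheory Finset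
open scoped RealInnerProductSpace ENNReal NNReal BigOperators

noncomputable section

/-- The sub-Gaussian norm `‖X‖_{ψ₂} = inf {t > 0 : E exp(X²/t²) ≤ 2}` of a real random
variable `X` on `(Ω, μ)`. -/
def subgNorm {Ω : Type*} [MeasurableSpace Ω] (μ : Measure Ω) (X : Ω → ℝ) : ℝ :=
  sInf {t : ℝ | 0 < t ∧ ∫ ω, Real.exp (X ω ^ 2 / t ^ 2) ∂μ ≤ 2}

/-- Assumption 1: the rows `a_i = A ω i` of the random matrix `A` are independent unit
vectors, and each rescaled row `√n • a_i` is mean zero, isotropic and has sub-Gaussian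
norm at most `K` (i.e. `‖⟨√n • a_i, x⟩‖_{ψ₂} ≤ K` for every unit vector `x`). -/
structure Assumption1 {Ω : Type*} [MeasurableSpace Ω] (μ : Measure Ω)
    {m n : ℕ} (A : Ω → Fin m → EuclideanSpace ℝ (Fin n)) (K : ℝ) : Prop where
  measurableRows : ∀ i, Measurable fun ω => A ω i
  unitNorm : ∀ᵐ ω ∂μ, ∀ i, ‖A ω i‖ = 1
  indepRows : iIndepFun (fun i ω => A ω i) μ
  meanZero : ∀ i j, ∫ ω, Real.sqrt n * A ω i j ∂μ = 0
  isotropic : ∀ i j k, ∫ ω, (Real.sqrt n * A ω i j) * (Real.sqrt n * A ω i k) ∂μ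
      = if j = k then 1 else 0
  subgaussian : ∀ i, ∀ x : EuclideanSpace ℝ (Fin n), ‖x‖ = 1 →
      subgNorm μ (fun ω => ⟪Real.sqrt n • A ω i, x⟫) ≤ K

/-- Assumption 2: each entry `a_{ij} = A ω i j` of the random matrix has a probability
density function bounded pointwise by `D √n`. -/
def Assumption2 {Ω : Type*} [MeasurableSpace Ω] (μ : Measure Ω)
    {m n : ℕ} (A : Ω → Fin m → EuclideanSpace ℝ (Fin n)) (D : ℝ) : Prop :=
  ∀ i j, ∃ φ : ℝ → ℝ≥0∞,
    Measure.map (fun ω => A ω i j) μ = MeasureTheory.volume.withDensity φ ∧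
    ∀ t : ℝ, φ t ≤ ENNReal.ofReal (D * Real.sqrt n)

/-- The `q`-quantile of the multiset `{r 0, …, r (m-1)}`: its `⌊q·m⌋`-th smallest element
(1-indexed). -/
def quantile {m : ℕ} (q : ℝ) (r : Fin m → ℝ) : ℝ :=
  (Multiset.sort (Multiset.map r Finset.univ.val) (· ≤ ·)).getD (⌊q * (m : ℝ)⌋.toNat - 1) 0

/-- `sgn s = 1` if `s > 0` and `-1` otherwise. -/
def sgn (s : ℝ) : ℝ := if 0 < s then 1 else -1

/-- The optimal SGD step size `η*(x) = (1/m) ∑ᵢ sgn(⟨aᵢ,x⟩ - bᵢ)·⟨x - x*, aᵢ⟩`. -/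
def etaStar {m n : ℕ} (a : Fin m → EuclideanSpace ℝ (Fin n)) (b : Fin m → ℝ)
    (xstar x : EuclideanSpace ℝ (Fin n)) : ℝ :=
  (1 / m) * ∑ i, sgn (⟪a i, x⟫ - b i) * ⟪x - xstar, a i⟫

/-!
On the event that `‖A v‖ < 4K√(m/n)` for every `v` in a `1/2`-net of the unit sphere, the operator
norm of `A` is at most `8K√(m/n)`. Counting then shows that, for every `u`, at most `α²m ≤ αm`
rows satisfy `|⟪aᵢ, u⟫| > (8K / (α√n)) ‖u‖`, and with `u = x - x*` the residual
`⟪aᵢ, x⟫ - bᵢ` differs from `⟪aᵢ, u⟫` only on the support of `b_C`.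

For a fixed unit vector `v` the variables `n ⟪aᵢ, v⟫² / (2K)²` are independent with
`𝔼 exp ≤ 2` (sub-Gaussian norm `≤ K < 2K`), so Chernoff bounds `ℙ(‖A v‖ ≥ 4K√(m/n))` by
`2ᵐ e^{-4m}`. A volume argument gives a net of size `5ⁿ`, and `5ⁿ 2ᵐ e^{-4m} ≤ e^{-m}` for `n ≤ m`.
-/

open Metric Module Real

section Packing

variable {E : Type*} [NormedAddCommGroup E] [NormedSpace ℝ E] [FiniteDimensional ℝ E]

theorem Metric.IsSeparated.card_le_of_subset_closedBall {ε : ℝ≥0} (hε : 0 < ε) {F : Finset E}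
    (hF : (F : Set E) ⊆ closedBall 0 1) (hsep : IsSeparated ε (F : Set E)) :
    (#F : ℝ) ≤ (1 + 2 / ε) ^ finrank ℝ E := by
  let _ : MeasurableSpace E := borel E
  have _ : BorelSpace E := ⟨rfl⟩
  set μ : Measure E := Measure.addHaar
  have hdisj : (F : Set E).PairwiseDisjoint fun x => ball x (ε / 2) := fun x hx y hy hxy =>
    ball_disjoint_ball <| by
      have h : (ε : ℝ≥0∞) < edist x y := hsep hx hy hxy
      rw [edist_dist, ENNReal.coe_lt_ofReal] at h
      linarith
  have hsub : (⋃ x ∈ F, ball x (ε / 2)) ⊆ ball (0 : E) (1 + ε / 2) := by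
    simp only [Set.iUnion_subset_iff]
    intro x hx
    exact ball_subset_ball' (by linarith [mem_closedBall.mp (hF hx)])
  have hvol : (#F : ℝ≥0∞) * μ (ball 0 (ε / 2)) ≤ μ (ball 0 (1 + ε / 2)) := by
    calc (#F : ℝ≥0∞) * μ (ball 0 (ε / 2)) = ∑ x ∈ F, μ (ball x (ε / 2)) := by
          simp [Measure.addHaar_ball_center]
      _ = μ (⋃ x ∈ F, ball x (ε / 2)) :=
          (measure_biUnion_finset hdisj fun _ _ => measurableSet_ball).symm
      _ ≤ _ := measure_mono hsub
  rw [Measure.addHaar_ball_of_pos μ (0 : E) (r := ε / 2) (by positivity),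
    Measure.addHaar_ball_of_pos μ (0 : E) (r := 1 + ε / 2) (by positivity),
    ← mul_assoc, ENNReal.mul_le_mul_iff_left (measure_ball_pos μ _ one_pos).ne'
      measure_ball_lt_top.ne, ← ENNReal.ofReal_natCast, ← ENNReal.ofReal_mul (by positivity),
    ENNReal.ofReal_le_ofReal_iff (by positivity), ← le_div_iff₀ (by positivity), ← div_pow]
    at hvol
  rwa [show (1 + ε / 2) / (ε / 2) = 1 + 2 / (ε : ℝ) by field_simp; ring] at hvol

theorem Metric.packingNumber_le_of_subset_closedBall {ε : ℝ≥0} (hε : 0 < ε) {A : Set E}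
    (hA : A ⊆ closedBall 0 1) :
    packingNumber ε A ≤ ⌊(1 + 2 / (ε : ℝ)) ^ finrank ℝ E⌋₊ := by
  refine iSup_le fun C => iSup_le fun hCA => iSup_le fun hC => ?_
  by_contra! hlt
  obtain ⟨T, hTC, hT⟩ := Set.exists_subset_encard_eq (Order.add_one_le_of_lt hlt)
  have hTfin : T.Finite := Set.finite_of_encard_eq_coe (k := _ + 1) (by simpa using hT)
  have hcard := IsSeparated.card_le_of_subset_closedBall hε (F := hTfin.toFinset)
    (by simpa using (hTC.trans hCA).trans hA) (by simpa using hC.subset hTC)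
  have hk (k : ℕ) : ((k : ℕ∞) + 1).toNat = k + 1 := by norm_cast
  rw [← Set.ncard_eq_toFinset_card T hTfin, Set.ncard_def, hT, hk] at hcard
  push_cast at hcard
  linarith [Nat.lt_floor_add_one ((1 + 2 / (ε : ℝ)) ^ finrank ℝ E)]

theorem Metric.exists_finset_isCover_sphere {ε : ℝ≥0} (hε : 0 < ε) :
    ∃ N : Finset E, (N : Set E) ⊆ sphere 0 1 ∧ (#N : ℝ) ≤ (1 + 2 / ε) ^ finrank ℝ E ∧
      IsCover ε (sphere (0 : E) 1) N := by
  have hfin : packingNumber ε (sphere (0 : E) 1) ≠ ⊤ :=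
    (packingNumber_le_of_subset_closedBall hε sphere_subset_closedBall).trans_lt
      (ENat.natCast_lt_top _) |>.ne
  have hN : (maximalSeparatedSet ε (sphere (0 : E) 1)).Finite := by
    rw [← Set.encard_ne_top_iff, encard_maximalSeparatedSet hfin]
    exact hfin
  refine ⟨hN.toFinset, by simpa using maximalSeparatedSet_subset, ?_, by
    simpa using isCover_maximalSeparatedSet hfin⟩
  exact IsSeparated.card_le_of_subset_closedBall hε
    (by simpa using maximalSeparatedSet_subset.trans sphere_subset_closedBall)
    (by simpa using isSeparated_maximalSeparatedSet)

end Packing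

theorem ContinuousLinearMap.opNorm_le_of_isCover_sphere {E F : Type*} [NormedAddCommGroup E]
    [NormedSpace ℝ E] [SeminormedAddCommGroup F] [NormedSpace ℝ F] (L : E →L[ℝ] F)
    {ε : ℝ≥0} (hε : ε < 1) {N : Set E} (hN : IsCover ε (sphere (0 : E) 1) N) {M : ℝ}
    (hM0 : 0 ≤ M) (hM : ∀ v ∈ N, ‖L v‖ ≤ M) :
    ‖L‖ ≤ M / (1 - ε) := by
  have hε' : (ε : ℝ) < 1 := hε
  have key : ‖L‖ ≤ M + ε * ‖L‖ := by
    refine L.opNorm_le_of_unit_norm (by positivity) fun u hu => ?_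
    obtain ⟨v, hvN, huv⟩ := hN (mem_sphere_zero_iff_norm.mpr hu)
    have huv : ‖u - v‖ ≤ ε := by
      rw [← dist_eq_norm, dist_le_coe, ← edist_le_coe]
      exact huv
    calc ‖L u‖ = ‖L v + L (u - v)‖ := by rw [← map_add, add_sub_cancel]
      _ ≤ ‖L v‖ + ‖L‖ * ‖u - v‖ := norm_add_le_of_le le_rfl (L.le_opNorm _)
      _ ≤ M + ‖L‖ * ε := by gcongr; exact hM v hvN
      _ = M + ε * ‖L‖ := by ring
  rw [le_div_iff₀ (by linarith)]
  linarith

section RowMap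

variable {ι E : Type*} [NormedAddCommGroup E] [InnerProductSpace ℝ E]

/-- The matrix with rows `a i`, as an operator into `ℓ²(ι)`. -/
def rowMap [Fintype ι] (a : ι → E) : E →L[ℝ] EuclideanSpace ℝ ι :=
  (EuclideanSpace.equiv ι ℝ).symm.toContinuousLinearMap.comp
    (ContinuousLinearMap.pi fun i => innerSL ℝ (a i))

theorem rowMap_apply [Fintype ι] (a : ι → E) (u : E) (i : ι) : rowMap a u i = ⟪a i, u⟫ := rfl

theorem norm_rowMap_apply_sq [Fintype ι] (a : ι → E) (u : E) :
    ‖rowMap a u‖ ^ 2 = ∑ i, ⟪a i, u⟫ ^ 2 := by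
  simp [EuclideanSpace.norm_sq_eq, rowMap_apply]

end RowMap

theorem Finset.card_filter_lt_abs_mul_sq_le {ι : Type*} (s : Finset ι) (f : ι → ℝ) {t : ℝ}
    (ht : 0 ≤ t) : (#{i ∈ s | t < |f i|} : ℝ) * t ^ 2 ≤ ∑ i ∈ s, f i ^ 2 := by
  calc (#{i ∈ s | t < |f i|} : ℝ) * t ^ 2 = ∑ i ∈ s with t < |f i|, t ^ 2 := by
        rw [sum_const, nsmul_eq_mul]
    _ ≤ ∑ i ∈ s with t < |f i|, f i ^ 2 := sum_le_sum fun i hi => by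
        rw [← sq_abs (f i)]; gcongr; exact (mem_filter.mp hi).2.le
    _ ≤ ∑ i ∈ s, f i ^ 2 := sum_le_sum_of_subset_of_nonneg (filter_subset _ _)
        fun _ _ _ => sq_nonneg _

theorem card_lt_abs_inner_mul_sq_le {ι E : Type*} [Fintype ι] [NormedAddCommGroup E]
    [InnerProductSpace ℝ E] (a : ι → E) (u : E) {c : ℝ} (hc : 0 < c) :
    (#{i | c * ‖u‖ < |⟪a i, u⟫|} : ℝ) * c ^ 2 ≤ ‖rowMap a‖ ^ 2 := by
  rcases eq_or_ne u 0 with rfl | hu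
  · simp
  have hu : 0 < ‖u‖ ^ 2 := by positivity
  refine le_of_mul_le_mul_right ?_ hu
  calc (#{i | c * ‖u‖ < |⟪a i, u⟫|} : ℝ) * c ^ 2 * ‖u‖ ^ 2
      = #{i | c * ‖u‖ < |⟪a i, u⟫|} * (c * ‖u‖) ^ 2 := by ring
    _ ≤ ‖rowMap a u‖ ^ 2 := by
        rw [norm_rowMap_apply_sq]
        exact Finset.card_filter_lt_abs_mul_sq_le _ _ (by positivity)
    _ ≤ (‖rowMap a‖ * ‖u‖) ^ 2 := by gcongr; exact (rowMap a).le_opNorm u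
    _ = ‖rowMap a‖ ^ 2 * ‖u‖ ^ 2 := by ring

theorem card_not_abs_residual_le {ι E : Type*} [Fintype ι] [NormedAddCommGroup E]
    [InnerProductSpace ℝ E] (a : ι → E) (bC : ι → ℝ) (xstar x : E) {c : ℝ} (hc : 0 < c) :
    (#{i | ¬ |⟪a i, x⟫ - (⟪a i, xstar⟫ + bC i)| ≤ c * ‖x - xstar‖} : ℝ)
      ≤ #{i | bC i ≠ 0} + ‖rowMap a‖ ^ 2 / c ^ 2 := by
  classical
  have hsub : ({i | ¬ |⟪a i, x⟫ - (⟪a i, xstar⟫ + bC i)| ≤ c * ‖x - xstar‖} : Finset ι)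
      ⊆ ({i | bC i ≠ 0} : Finset ι) ∪
        ({i | c * ‖x - xstar‖ < |⟪a i, x - xstar⟫|} : Finset ι) := by
    intro i
    simp only [Finset.mem_union, Finset.mem_filter, Finset.mem_univ, true_and, not_le,
      inner_sub_right]
    intro h
    by_cases hb : bC i = 0
    · rw [hb, add_zero] at h
      exact Or.inr h
    · exact Or.inl hb
  calc (#{i | ¬ |⟪a i, x⟫ - (⟪a i, xstar⟫ + bC i)| ≤ c * ‖x - xstar‖} : ℝ)
      ≤ #{i | bC i ≠ 0} + #{i | c * ‖x - xstar‖ < |⟪a i, x - xstar⟫|} := by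
        exact_mod_cast (Finset.card_le_card hsub).trans (Finset.card_union_le _ _)
    _ ≤ #{i | bC i ≠ 0} + ‖rowMap a‖ ^ 2 / c ^ 2 := by
        gcongr
        rw [le_div_iff₀ (by positivity)]
        exact card_lt_abs_inner_mul_sq_le a _ hc

theorem card_not_abs_residual_le_of_norm_rowMap_le {ι E : Type*} [Fintype ι]
    [NormedAddCommGroup E] [InnerProductSpace ℝ E] {a : ι → E} {m n : ℕ} (hn : 0 < n)
    {K α : ℝ} (hK : 0 < K) (hα : 0 < α) (hα1 : α ≤ 1) (ha : ‖rowMap a‖ ≤ 8 * K * √m / √n)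
    (bC : ι → ℝ) (xstar x : E) :
    (#{i | ¬ |⟪a i, x⟫ - (⟪a i, xstar⟫ + bC i)| ≤ 8 * K / (α * √n) * ‖x - xstar‖} : ℝ)
      ≤ #{i | bC i ≠ 0} + α * m := by
  have hn' : (0 : ℝ) < n := by exact_mod_cast hn
  have hratio : (8 * K * √m / √n) ^ 2 / (8 * K / (α * √n)) ^ 2 = α ^ 2 * m := by
    field_simp
    rw [sq_sqrt (by positivity)]
  refine (card_not_abs_residual_le a bC xstar x (by positivity)).trans ?_
  gcongr
  calc ‖rowMap a‖ ^ 2 / (8 * K / (α * √n)) ^ 2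
      ≤ (8 * K * √m / √n) ^ 2 / (8 * K / (α * √n)) ^ 2 := by gcongr
    _ = α ^ 2 * m := hratio
    _ ≤ α * m := by gcongr; nlinarith

section SubGaussian

variable {Ω : Type*} [MeasurableSpace Ω] {μ : Measure Ω}

theorem integrable_exp_sq_div_sq [IsFiniteMeasure μ] {Y : Ω → ℝ} (hY : AEMeasurable Y μ)
    {B : ℝ} (hB : ∀ᵐ ω ∂μ, |Y ω| ≤ B) (t : ℝ) :
    Integrable (fun ω => exp (Y ω ^ 2 / t ^ 2)) μ := by
  refine Integrable.mono' (integrable_const (exp (B ^ 2 / t ^ 2))) (by fun_prop) ?_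
  filter_upwards [hB] with ω hω
  rw [norm_of_nonneg (exp_pos _).le, exp_le_exp, ← sq_abs]
  gcongr

theorem integral_exp_sq_div_sq_le_two [IsProbabilityMeasure μ] {Y : Ω → ℝ}
    (hY : AEMeasurable Y μ) {B : ℝ} (hB : ∀ᵐ ω ∂μ, |Y ω| ≤ B) {t : ℝ}
    (ht : subgNorm μ Y < t) : ∫ ω, exp (Y ω ^ 2 / t ^ 2) ∂μ ≤ 2 := by
  set S := {t : ℝ | 0 < t ∧ ∫ ω, exp (Y ω ^ 2 / t ^ 2) ∂μ ≤ 2}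
  have hS : S.Nonempty := by
    have hlog : 0 < log 2 := log_pos one_lt_two
    refine ⟨(|B| + 1) / √(log 2), by positivity, ?_⟩
    calc ∫ ω, exp (Y ω ^ 2 / ((|B| + 1) / √(log 2)) ^ 2) ∂μ ≤ ∫ _ω, exp (log 2) ∂μ := by
          refine integral_mono_ae (integrable_exp_sq_div_sq hY hB _) (integrable_const _) ?_
          filter_upwards [hB] with ω hω
          have hY2 : Y ω ^ 2 ≤ (|B| + 1) ^ 2 := by
            rw [← sq_abs]
            gcongr
            linarith [le_abs_self B]
          rw [exp_le_exp, div_pow, sq_sqrt hlog.le, div_div_eq_mul_div,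
            div_le_iff₀ (by positivity), mul_comm]
          gcongr
      _ = 2 := by simp [exp_log]
  obtain ⟨t₀, ⟨ht₀, hint⟩, ht₀t⟩ := exists_lt_of_csInf_lt hS ht
  refine le_trans (integral_mono (integrable_exp_sq_div_sq hY hB _)
    (integrable_exp_sq_div_sq hY hB _) fun ω => ?_) hint
  rw [exp_le_exp]
  gcongr

end SubGaussian

theorem ProbabilityTheory.iIndepFun.measureReal_sum_ge_le {Ω ι : Type*} [MeasurableSpace Ω]
    {μ : Measure Ω} [IsFiniteMeasure μ] [Fintype ι] {X : ι → Ω → ℝ} (hind : iIndepFun X μ)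
    (hmeas : ∀ i, Measurable (X i)) {t c : ℝ} (ht : 0 ≤ t)
    (hint : ∀ i, Integrable (fun ω => exp (t * X i ω)) μ) (hmgf : ∀ i, mgf (X i) μ t ≤ c)
    (ε : ℝ) : μ.real {ω | ε ≤ ∑ i, X i ω} ≤ exp (-t * ε) * c ^ Fintype.card ι := by
  have hsum := measure_ge_le_exp_mul_mgf (X := ∑ i, X i) ε ht
    (hind.integrable_exp_mul_sum hmeas fun i _ => hint i)
  rw [hind.mgf_sum hmeas] at hsum
  simp only [Finset.sum_apply] at hsum
  refine hsum.trans (mul_le_mul_of_nonneg_left ?_ (exp_pos _).le)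
  exact (Finset.prod_le_prod (fun i _ => mgf_nonneg) fun i _ => hmgf i).trans_eq
    (by rw [Finset.prod_const, Finset.card_univ])

theorem Assumption1.measureReal_le_norm_rowMap_le {Ω : Type*} [MeasurableSpace Ω]
    {μ : Measure Ω} [IsProbabilityMeasure μ] {m n : ℕ}
    {A : Ω → Fin m → EuclideanSpace ℝ (Fin n)} {K : ℝ} (hA : Assumption1 μ A K) (hK : 0 < K)
    {v : EuclideanSpace ℝ (Fin n)} (hv : ‖v‖ = 1) {r : ℝ} (hr : 0 ≤ r) :
    μ.real {ω | r ≤ ‖rowMap (A ω) v‖} ≤ exp (-(n * r ^ 2 / (4 * K ^ 2))) * 2 ^ m := by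
  set Y : Fin m → Ω → ℝ := fun i ω => √n * ⟪A ω i, v⟫
  have hinner : Measurable fun w : EuclideanSpace ℝ (Fin n) => ⟪w, v⟫ := by fun_prop
  have hYmeas (i : Fin m) : Measurable (Y i) :=
    (hinner.comp (hA.measurableRows i)).const_mul _
  have hYbdd (i : Fin m) : ∀ᵐ ω ∂μ, |Y i ω| ≤ √n := by
    filter_upwards [hA.unitNorm] with ω hω
    calc |Y i ω| = √n * |⟪A ω i, v⟫| := by rw [abs_mul, abs_of_nonneg (sqrt_nonneg _)]
      _ ≤ √n * (‖A ω i‖ * ‖v‖) := by gcongr; exact abs_real_inner_le_norm _ _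
      _ = √n := by rw [hω i, hv, one_mul, mul_one]
  have hYsubg (i : Fin m) : subgNorm μ (Y i) < 2 * K := by
    have h := hA.subgaussian i v hv
    simp only [real_inner_smul_left] at h
    linarith
  set Z : Fin m → Ω → ℝ := fun i ω => Y i ω ^ 2 / (2 * K) ^ 2
  have hZint (i : Fin m) : Integrable (fun ω => exp (1 * Z i ω)) μ := by
    simpa [Z] using integrable_exp_sq_div_sq (hYmeas i).aemeasurable (hYbdd i) (2 * K)
  have hZmgf (i : Fin m) : mgf (Z i) μ 1 ≤ 2 := by
    simpa [mgf, Z] using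
      integral_exp_sq_div_sq_le_two (hYmeas i).aemeasurable (hYbdd i) (hYsubg i)
  have hZind : iIndepFun Z μ :=
    hA.indepRows.comp (fun _ w => (√n * ⟪w, v⟫) ^ 2 / (2 * K) ^ 2) fun _ => by fun_prop
  have hchernoff := hZind.measureReal_sum_ge_le (fun i => by fun_prop) zero_le_one hZint hZmgf
    (n * r ^ 2 / (4 * K ^ 2))
  rw [Fintype.card_fin, neg_one_mul] at hchernoff
  refine le_trans (measureReal_mono fun ω hω => ?_) hchernoff
  have hsum : ∑ i, Z i ω = n * ‖rowMap (A ω) v‖ ^ 2 / (4 * K ^ 2) := by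
    simp only [Z, Y, norm_rowMap_apply_sq, mul_pow, sq_sqrt (Nat.cast_nonneg n),
      ← Finset.sum_div, ← Finset.mul_sum]
    ring
  simp only [Set.mem_ofPred_eq, hsum] at hω ⊢
  gcongr

theorem MeasureTheory.ofReal_one_sub_le_measure {Ω : Type*} [MeasurableSpace Ω]
    {μ : Measure Ω} [IsProbabilityMeasure μ] {s : Set Ω} {δ : ℝ} (hδ : 0 ≤ δ)
    (h : μ sᶜ ≤ ENNReal.ofReal δ) : ENNReal.ofReal (1 - δ) ≤ μ s := by
  have hcover : 1 ≤ μ s + μ sᶜ := by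
    simpa [Set.union_compl_self] using measure_union_le (μ := μ) s sᶜ
  rw [ENNReal.ofReal_sub _ hδ, ENNReal.ofReal_one, tsub_le_iff_right]
  exact hcover.trans (by gcongr)

theorem five_pow_mul_two_pow_mul_exp_le {n m : ℕ} (hnm : n ≤ m) :
    (5 : ℝ) ^ n * 2 ^ m * exp (-(4 * m)) ≤ exp (-m) := by
  have h10 : (10 : ℝ) ≤ exp 3 := by
    calc (10 : ℝ) ≤ 2.7182818283 ^ 3 := by norm_num
      _ ≤ exp 1 ^ 3 := by gcongr; exact exp_one_gt_d9.le
      _ = exp 3 := by rw [← exp_nat_mul]; norm_num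
  calc (5 : ℝ) ^ n * 2 ^ m * exp (-(4 * m)) ≤ 5 ^ m * 2 ^ m * exp (-(4 * m)) := by
        gcongr; norm_num
    _ = 10 ^ m * exp (-(4 * m)) := by rw [← mul_pow]; norm_num
    _ ≤ exp 3 ^ m * exp (-(4 * m)) := by gcongr
    _ = exp (-m) := by rw [← exp_nat_mul, ← exp_add]; ring_nf

theorem Assumption1.measure_exists_mem_le_norm_rowMap_le {Ω : Type*} [MeasurableSpace Ω]
    {μ : Measure Ω} [IsProbabilityMeasure μ] {m n : ℕ}
    {A : Ω → Fin m → EuclideanSpace ℝ (Fin n)} {K : ℝ} (hA : Assumption1 μ A K) (hK : 0 < K)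
    (hn : 0 < n) (hnm : n ≤ m) {N : Finset (EuclideanSpace ℝ (Fin n))}
    (hN : (N : Set (EuclideanSpace ℝ (Fin n))) ⊆ sphere 0 1) (hNcard : (#N : ℝ) ≤ 5 ^ n) :
    μ (⋃ v ∈ N, {ω | 4 * K * √m / √n ≤ ‖rowMap (A ω) v‖}) ≤ ENNReal.ofReal (exp (-m)) := by
  have hexponent : n * (4 * K * √m / √n) ^ 2 / (4 * K ^ 2) = 4 * m := by
    have : (0 : ℝ) < n := by exact_mod_cast hn
    field_simp
    rw [sq_sqrt (by positivity), sq_sqrt (by positivity)]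
  have hrow (v) (hv : v ∈ N) : μ {ω | 4 * K * √m / √n ≤ ‖rowMap (A ω) v‖}
      ≤ ENNReal.ofReal (exp (-(4 * m)) * 2 ^ m) := by
    rw [← ofReal_measureReal, ← hexponent]
    exact ENNReal.ofReal_le_ofReal <| hA.measureReal_le_norm_rowMap_le hK
      (mem_sphere_zero_iff_norm.mp (hN hv)) (by positivity)
  calc μ (⋃ v ∈ N, {ω | 4 * K * √m / √n ≤ ‖rowMap (A ω) v‖})
      ≤ ∑ v ∈ N, μ {ω | 4 * K * √m / √n ≤ ‖rowMap (A ω) v‖} := measure_biUnion_finset_le _ _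
    _ ≤ ∑ _v ∈ N, ENNReal.ofReal (exp (-(4 * m)) * 2 ^ m) := Finset.sum_le_sum hrow
    _ = ENNReal.ofReal (#N * (exp (-(4 * m)) * 2 ^ m)) := by
        rw [Finset.sum_const, nsmul_eq_mul, ← ENNReal.ofReal_natCast,
          ← ENNReal.ofReal_mul (by positivity)]
    _ ≤ ENNReal.ofReal (exp (-m)) := by
        refine ENNReal.ofReal_le_ofReal (le_trans ?_ (five_pow_mul_two_pow_mul_exp_le hnm))
        calc (#N : ℝ) * (exp (-(4 * m)) * 2 ^ m) ≤ 5 ^ n * (exp (-(4 * m)) * 2 ^ m) := by gcongr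
          _ = 5 ^ n * 2 ^ m * exp (-(4 * m)) := by ring

/-- (Remark `corr_med_cor`). For the corrupted system `b = A x* + b_C` with
`|supp(b_C)| = βm`, where `A` is a random matrix with `m ≥ n` satisfying Assumption 1 and
`α ∈ (0,1]`, with probability at least `1 - 2exp(-m)`, simultaneously for every `x ∈ ℝⁿ`
the bound `|⟨aᵢ,x⟩ - bᵢ| ≤ (C_K/(α√n))·‖x - x*‖` holds for all but at most `(α+β)m`
indices `i`. -/
theorem corr_med_cor :
    ∀ K : ℝ, 0 < K →
    ∃ CK : ℝ, 0 < CK ∧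
    ∀ (α β : ℝ), 0 < α → α ≤ 1 → 0 ≤ β → β < 1 →
    ∀ (Ω : Type) (_ : MeasurableSpace Ω) (μ : Measure Ω), IsProbabilityMeasure μ →
    ∀ (m n : ℕ), 0 < n → n ≤ m →
    ∀ A : Ω → Fin m → EuclideanSpace ℝ (Fin n), Assumption1 μ A K →
    ∀ (xstar : EuclideanSpace ℝ (Fin n)) (bC : Fin m → ℝ),
      ((Finset.univ.filter fun i => bC i ≠ 0).card : ℝ) = β * m →
    ENNReal.ofReal (1 - 2 * Real.exp (-(m : ℝ))) ≤
      μ {ω | ∀ x : EuclideanSpace ℝ (Fin n),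
          ((Finset.univ.filter fun i =>
              ¬ |⟪A ω i, x⟫ - (⟪A ω i, xstar⟫ + bC i)| ≤
                CK / (α * Real.sqrt n) * ‖x - xstar‖).card : ℝ) ≤ (α + β) * m} := by
  intro K hK
  refine ⟨8 * K, by positivity, ?_⟩
  intro α β hα hα1 _ _ Ω _ μ _ m n hn hnm A hA xstar bC hbC
  obtain ⟨N, hNsphere, hNcard, hNcover⟩ :=
    exists_finset_isCover_sphere (E := EuclideanSpace ℝ (Fin n)) (ε := 1 / 2) (by norm_num)
  have hNcard' : (#N : ℝ) ≤ 5 ^ n := by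
    norm_num [finrank_euclideanSpace] at hNcard
    exact hNcard
  have hbad := hA.measure_exists_mem_le_norm_rowMap_le hK hn hnm hNsphere hNcard'
  refine ofReal_one_sub_le_measure (by positivity) (le_trans (measure_mono fun ω hω => ?_)
    (hbad.trans (ENNReal.ofReal_le_ofReal (by linarith [exp_pos (-(m : ℝ))]))))
  by_contra hgood
  simp only [Set.mem_iUnion, Set.mem_ofPred_eq, not_exists, not_le] at hgood
  have hL : ‖rowMap (A ω)‖ ≤ 8 * K * √m / √n :=
    ((rowMap (A ω)).opNorm_le_of_isCover_sphere (by norm_num) hNcover (by positivity)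
      fun v hv => (hgood v hv).le).trans_eq (by norm_num; ring)
  refine hω fun x => ?_
  refine (card_not_abs_residual_le_of_norm_rowMap_le hn hK hα hα1 hL bC xstar x).trans ?_
  rw [hbC]
  linarith
end
end

section
/- Let a_1, …, a_m ∈ ℝⁿ be unit vectors, b ∈ ℝ^m, x* ∈ ℝⁿ, and let 0 < c_1 ≤ c_2 < 2. Suppose an SGD method produces iterates x_{k+1} = x_k − η_k·sgn(⟨a_i, x_k⟩ − b_i)·a_i with i uniform on [m], where the step size η_k satisfies c_1 ≤ η_k/η*(x_k) ≤ c_2 at each iteration. Then there exists a constant c = c(c_1, c_2) > 0 such that for every k, E_k‖x_{k+1} − x*‖² ≤ (1 − c·(η*(x_k)/‖x_k − x*‖)²)·‖x_k − x*‖², where E_k is the expectation over the index sampled at step k and η*(x) = (1/m)·Σ_{i=1}^m sgn(⟨a_i, x⟩ − b_i)·⟨x − x*, a_i⟩. -/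
open MeasureTheory ProbabilityTheory Finset
open scoped RealInnerProductSpace ENNReal NNReal BigOperators

noncomputable section

/-! Expanding the square, the average squared error after a step of size `η` is
`‖x - x*‖² - 2 η η* + η²`, because `sgn² = 1` and `‖aᵢ‖ = 1`. Writing `η = t η*`, this equals
`‖x - x*‖² - (1 - (t - 1)²) η*²`, and `|t - 1| ≤ max {c₂ - 1, 1 - c₁} < 1`. -/

lemma sgn_sq (s : ℝ) : sgn s ^ 2 = 1 := by
  unfold sgn; split <;> norm_num

lemma norm_sub_smul_sub_sq {E : Type*} [NormedAddCommGroup E] [InnerProductSpace ℝ E]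
    (x y v : E) (t : ℝ) :
    ‖(x - t • v) - y‖ ^ 2 = ‖x - y‖ ^ 2 - 2 * t * ⟪x - y, v⟫ + t ^ 2 * ‖v‖ ^ 2 := by
  rw [sub_right_comm, norm_sub_sq_real, real_inner_smul_right, norm_smul, Real.norm_eq_abs,
    mul_pow, sq_abs]
  ring

lemma average_sq_dist_sgnStep {m n : ℕ} (hm : m ≠ 0)
    (a : Fin m → EuclideanSpace ℝ (Fin n)) (ha : ∀ i, ‖a i‖ = 1)
    (b : Fin m → ℝ) (xstar x : EuclideanSpace ℝ (Fin n)) (η : ℝ) :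
    (1 / m : ℝ) * ∑ i, ‖(x - (η * sgn (⟪a i, x⟫ - b i)) • a i) - xstar‖ ^ 2 =
      ‖x - xstar‖ ^ 2 - 2 * η * etaStar a b xstar x + η ^ 2 := by
  simp only [norm_sub_smul_sub_sq, ha, mul_pow, sgn_sq, one_pow, mul_one, etaStar]
  have hsgn : ∑ i, 2 * (η * sgn (⟪a i, x⟫ - b i)) * ⟪x - xstar, a i⟫ =
      2 * η * ∑ i, sgn (⟪a i, x⟫ - b i) * ⟪x - xstar, a i⟫ := by
    rw [mul_sum]; ring_nf
  rw [sum_add_distrib, sum_sub_distrib, hsgn, sum_const, sum_const, card_univ,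
    Fintype.card_fin, nsmul_eq_mul, nsmul_eq_mul]
  field_simp

def sgnStepRate (c₁ c₂ : ℝ) : ℝ := 1 - max (c₂ - 1) (1 - c₁) ^ 2

lemma sgnStepRate_pos {c₁ c₂ : ℝ} (hc₁ : 0 < c₁) (hc₁₂ : c₁ ≤ c₂) (hc₂ : c₂ < 2) :
    0 < sgnStepRate c₁ c₂ := by
  have hM : |max (c₂ - 1) (1 - c₁)| < 1 :=
    abs_lt.2 ⟨by linarith [le_max_right (c₂ - 1) (1 - c₁)], max_lt (by linarith) (by linarith)⟩
  exact sub_pos.2 ((sq_lt_one_iff_abs_lt_one _).2 hM)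

lemma sq_sub_one_le_sq_max {c₁ c₂ t : ℝ} (h₁ : c₁ ≤ t) (h₂ : t ≤ c₂) :
    (t - 1) ^ 2 ≤ max (c₂ - 1) (1 - c₁) ^ 2 :=
  sq_le_sq' (by linarith [le_max_right (c₂ - 1) (1 - c₁)])
    (by linarith [le_max_left (c₂ - 1) (1 - c₁)])

lemma sq_sub_two_mul_le_neg_sgnStepRate_mul_sq {c₁ c₂ η s : ℝ} (hs : s ≠ 0)
    (h₁ : c₁ ≤ η / s) (h₂ : η / s ≤ c₂) :
    η ^ 2 - 2 * η * s ≤ -(sgnStepRate c₁ c₂ * s ^ 2) := by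
  have hη : η = η / s * s := (div_mul_cancel₀ η hs).symm
  have ht := sq_sub_one_le_sq_max h₁ h₂
  unfold sgnStepRate
  rw [hη]
  nlinarith [mul_le_mul_of_nonneg_right ht (sq_nonneg s)]

/-- per-iteration guarantee for SGD with a near-optimal step size
(Proposition `almostOptrate`, first part). If at the current iterate `x` the step size
`η` satisfies `c₁ ≤ η/η*(x) ≤ c₂` with `0 < c₁ ≤ c₂ < 2`, then the expected (over the
uniformly sampled row `i`) squared error after the step
`x ↦ x - η·sgn(⟨aᵢ,x⟩ - bᵢ)·aᵢ` satisfies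
`E_k‖x_{k+1} - x*‖² ≤ (1 - c·(η*(x)/‖x - x*‖)²)·‖x - x*‖²` for a constant
`c = c(c₁, c₂) > 0`. -/
theorem almostOptrate_step {m n : ℕ} (hm : 0 < m)
    (a : Fin m → EuclideanSpace ℝ (Fin n)) (ha : ∀ i, ‖a i‖ = 1)
    (b : Fin m → ℝ) (xstar : EuclideanSpace ℝ (Fin n))
    (c₁ c₂ : ℝ) (hc₁ : 0 < c₁) (hc₁₂ : c₁ ≤ c₂) (hc₂ : c₂ < 2) :
    ∃ c : ℝ, 0 < c ∧
      ∀ (x : EuclideanSpace ℝ (Fin n)) (η : ℝ),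
        c₁ ≤ η / etaStar a b xstar x → η / etaStar a b xstar x ≤ c₂ →
        ((1 : ℝ) / m) * ∑ i, ‖(x - (η * sgn (⟪a i, x⟫ - b i)) • a i) - xstar‖ ^ 2 ≤
          (1 - c * (etaStar a b xstar x / ‖x - xstar‖) ^ 2) * ‖x - xstar‖ ^ 2 := by
  refine ⟨sgnStepRate c₁ c₂, sgnStepRate_pos hc₁ hc₁₂ hc₂, fun x η h₁ h₂ => ?_⟩
  have hs : etaStar a b xstar x ≠ 0 := by
    rintro hs
    rw [hs, div_zero] at h₁
    linarith
  have hx : ‖x - xstar‖ ≠ 0 := by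
    rintro hx
    simp [etaStar, norm_eq_zero.1 hx] at hs
  have hrhs : (1 - sgnStepRate c₁ c₂ * (etaStar a b xstar x / ‖x - xstar‖) ^ 2) * ‖x - xstar‖ ^ 2
      = ‖x - xstar‖ ^ 2 - sgnStepRate c₁ c₂ * etaStar a b xstar x ^ 2 := by
    field_simp
  rw [average_sq_dist_sgnStep hm.ne' a ha, hrhs]
  linarith [sq_sub_two_mul_le_neg_sgnStepRate_mul_sq hs h₁ h₂]
end
end
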